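/- Let G on vertex set V (|V| = n ≥ 2) be the disjoint union of n−1 spanning arborescences A_1,...,A_{n−1}. Call a vertex v a multi-root if at least two of the A_i are rooted at v. If G contains a rainbow arborescence B̃ on a vertex subset Ṽ ⊆ V such that Ṽ contains all multi-roots, then G contains a rainbow spanning arborescence. -/

import Mathlib

open Finset

variable {V : Type*}

/-- `A` is the arc set of an arborescence on vertex set `U` rooted at `r`:
all arcs lie within `U`, the root has no incoming arc, every other vertex of `U`
has exactly one incoming arc, and every vertex of `U` is reachable from `r`. -/
def IsArborOn [DecidableEq V] (U : Finset V) (A : Finset (V × V)) (r : V) : Prop :=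
  r ∈ U ∧ (∀ e ∈ A, e.1 ∈ U ∧ e.2 ∈ U) ∧ (∀ e ∈ A, e.2 ≠ r) ∧
  (∀ v ∈ U, v ≠ r → (A.filter (fun e => e.2 = v)).card = 1) ∧
  (∀ v ∈ U, Relation.ReflTransGen (fun a b => (a, b) ∈ A) r v)

/-- A spanning arborescence on the whole (finite) vertex type. -/
def IsSpanningArbor [Fintype V] [DecidableEq V] (A : Finset (V × V)) (r : V) : Prop :=
  IsArborOn Finset.univ A r

/-- `B` is rainbow w.r.t. the colored arc sets `A 0, …, A (k-1)`:
each arc of `B` can be assigned a color whose class contains it, with all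
assigned colors distinct (i.e. at most one arc from each color). -/
def IsRainbowOf {k : ℕ} (A : Fin k → Finset (V × V)) (B : Finset (V × V)) : Prop :=
  ∃ c : V × V → Fin k, Set.InjOn c ↑B ∧ ∀ e ∈ B, e ∈ A (c e)


/-! Grow `B̃` one vertex at a time, keeping it rainbow. An arborescence on `U` has `|U| - 1` arcs,
so exactly `|V \ U|` colours are unused. If an unused colour `i` has its root in `U`, then `A i`
leaves `U` through some arc, which extends `B̃`. Otherwise the roots of the unused colours lie
outside `U` and, not being multi-roots, are pairwise distinct, so they fill `V \ U`. Let `i` be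
unused and `(u, rt)` the arc of `A i` entering the root `rt` of `B̃`. If `u ∉ U`, this arc extends
`B̃` backwards. If `u ∈ U`, adding `(u, rt)` and deleting the first arc `(rt, z)` of the path from
`rt` to `u` re-roots `B̃` at `z` and frees the colour `j` of `(rt, z)`; as `V \ U` is filled by
roots of other unused colours, `r j ∈ U`, and we are back in the first case. -/

theorem exists_fst_mem_snd_notMem_of_reflTransGen {S : Finset (V × V)} {U : Finset V} {x y : V}
    (h : Relation.ReflTransGen (fun p q => (p, q) ∈ S) x y) (hx : x ∈ U) (hy : y ∉ U) :
    ∃ e ∈ S, e.1 ∈ U ∧ e.2 ∉ U := by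
  induction h with
  | refl => exact absurd hx hy
  | @tail b c _ hbc ih =>
    by_cases hb : b ∈ U
    · exact ⟨(b, c), hbc, hb, hy⟩
    · exact ih hb

theorem exists_snd_eq_of_reflTransGen {S : Finset (V × V)} {x y : V}
    (h : Relation.ReflTransGen (fun p q => (p, q) ∈ S) x y) (hyx : y ≠ x) :
    ∃ e ∈ S, e.2 = y := by
  obtain hyx' | ⟨u, -, hu⟩ := h.cases_tail
  · exact absurd hyx' hyx
  · exact ⟨(u, y), hu, rfl⟩

theorem eq_of_reflTransGen_of_forall_snd_eq {S : Finset (V × V)} {x t : V}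
    (ht : ∀ e ∈ S, e.2 = t → e.1 = t)
    (h : Relation.ReflTransGen (fun p q => (p, q) ∈ S) x t) : x = t := by
  induction h using Relation.ReflTransGen.head_induction_on with
  | refl => rfl
  | head hxy _ ih =>
    subst ih
    exact ht _ hxy rfl

theorem reflTransGen_erase_of_not_reflTransGen [DecidableEq V] {S : Finset (V × V)} {x y a b : V}
    (ha : ¬Relation.ReflTransGen (fun p q => (p, q) ∈ S) x a)
    (h : Relation.ReflTransGen (fun p q => (p, q) ∈ S) x y) :
    Relation.ReflTransGen (fun p q => (p, q) ∈ S.erase (a, b)) x y := by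
  induction h with
  | refl => exact .refl
  | @tail p q hxp hpq ih =>
    refine ih.tail (mem_erase.2 ⟨fun hab => ha ?_, hpq⟩)
    rwa [← (Prod.mk.inj hab).1]

theorem reflTransGen_of_forall_notMem_snd_eq {S T : Finset (V × V)} {x y w : V}
    (hST : ∀ e ∈ S, e ∉ T → e.2 = w)
    (h : Relation.ReflTransGen (fun p q => (p, q) ∈ S) x y)
    (hx : Relation.ReflTransGen (fun p q => (p, q) ∈ T) w x) :
    Relation.ReflTransGen (fun p q => (p, q) ∈ T) w y := by
  induction h with
  | refl => exact hx
  | @tail p q _ hpq ih =>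
    by_cases hT : (p, q) ∈ T
    · exact ih.tail hT
    · obtain rfl : q = w := hST _ hpq hT
      exact .refl

theorem reflTransGen_mono_of_subset {S T : Finset (V × V)} (hST : S ⊆ T) {x y : V}
    (h : Relation.ReflTransGen (fun p q => (p, q) ∈ S) x y) :
    Relation.ReflTransGen (fun p q => (p, q) ∈ T) x y :=
  Relation.ReflTransGen.mono (fun _ _ hpq => hST hpq) _ _ h

namespace IsArborOn

variable [DecidableEq V] {U : Finset V} {B : Finset (V × V)} {rt : V}

theorem injOn_snd (hB : IsArborOn U B rt) : Set.InjOn Prod.snd (B : Set (V × V)) := by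
  intro e he f hf h
  have hcard := hB.2.2.2.1 e.2 (hB.2.1 e he).2 (hB.2.2.1 e he)
  exact card_le_one.1 hcard.le e (mem_filter.2 ⟨he, rfl⟩) f (mem_filter.2 ⟨hf, h.symm⟩)

theorem of_injOn_snd (hr : rt ∈ U) (harc : ∀ e ∈ B, e.1 ∈ U ∧ e.2 ∈ U)
    (hroot : ∀ e ∈ B, e.2 ≠ rt) (hinj : Set.InjOn Prod.snd (B : Set (V × V)))
    (hreach : ∀ v ∈ U, Relation.ReflTransGen (fun p q => (p, q) ∈ B) rt v) :
    IsArborOn U B rt := by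
  refine ⟨hr, harc, hroot, fun v hv hvr => le_antisymm ?_ ?_, hreach⟩
  · refine card_le_one.2 fun e he f hf => ?_
    rw [mem_filter] at he hf
    exact hinj he.1 hf.1 (he.2.trans hf.2.symm)
  · obtain ⟨e, he, hev⟩ := exists_snd_eq_of_reflTransGen (hreach v hv) hvr
    exact card_pos.2 ⟨e, mem_filter.2 ⟨he, hev⟩⟩

theorem fst_ne_snd (hB : IsArborOn U B rt) {e : V × V} (he : e ∈ B) : e.1 ≠ e.2 := by
  intro hloop
  have hfrom : ∀ f ∈ B, f.2 = e.2 → f.1 = e.2 := by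
    intro f hf hfe
    rw [hB.injOn_snd hf he hfe, hloop]
  exact hB.2.2.1 e he
    (eq_of_reflTransGen_of_forall_snd_eq hfrom (hB.2.2.2.2 _ (hB.2.1 e he).2)).symm

theorem card_add_one (hB : IsArborOn U B rt) : B.card + 1 = U.card := by
  have himage : B.image Prod.snd = U.erase rt := by
    ext v
    simp only [mem_image, mem_erase]
    constructor
    · rintro ⟨e, he, rfl⟩
      exact ⟨hB.2.2.1 e he, (hB.2.1 e he).2⟩
    · rintro ⟨hvr, hv⟩
      exact exists_snd_eq_of_reflTransGen (hB.2.2.2.2 v hv) hvr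
  rw [← card_image_of_injOn hB.injOn_snd, himage, card_erase_add_one hB.1]

theorem insert_arc (hB : IsArborOn U B rt) {a b : V} (ha : a ∈ U) (hb : b ∉ U) :
    IsArborOn (insert b U) (insert (a, b) B) rt := by
  have ⟨hr, harc, hroot, _, hreach⟩ := hB
  have hsub : B ⊆ insert (a, b) B := subset_insert _ _
  refine of_injOn_snd (mem_insert_of_mem hr) ?_ ?_ ?_ ?_
  · refine forall_mem_insert _ _ _ |>.2 ⟨⟨mem_insert_of_mem ha, mem_insert_self b U⟩, ?_⟩
    exact fun e he => ⟨mem_insert_of_mem (harc e he).1, mem_insert_of_mem (harc e he).2⟩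
  · exact forall_mem_insert _ _ _ |>.2 ⟨fun hbr : b = rt => hb (hbr ▸ hr), hroot⟩
  · rw [coe_insert, Set.injOn_insert fun h => hb (harc _ h).2]
    exact ⟨hB.injOn_snd, fun ⟨e, he, heb⟩ => hb (heb ▸ (harc e he).2 : (a, b).2 ∈ U)⟩
  · refine forall_mem_insert _ _ _ |>.2 ⟨?_, fun v hv => reflTransGen_mono_of_subset hsub (hreach v hv)⟩
    exact (reflTransGen_mono_of_subset hsub (hreach a ha)).tail (mem_insert_self _ _)

theorem insert_root (hB : IsArborOn U B rt) {x : V} (hx : x ∉ U) :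
    IsArborOn (insert x U) (insert (x, rt) B) x := by
  have ⟨hr, harc, hroot, _, hreach⟩ := hB
  have hsub : B ⊆ insert (x, rt) B := subset_insert _ _
  refine of_injOn_snd (mem_insert_self x U) ?_ ?_ ?_ ?_
  · refine forall_mem_insert _ _ _ |>.2 ⟨⟨mem_insert_self x U, mem_insert_of_mem hr⟩, ?_⟩
    exact fun e he => ⟨mem_insert_of_mem (harc e he).1, mem_insert_of_mem (harc e he).2⟩
  · refine forall_mem_insert _ _ _ |>.2 ⟨fun hrx => hx (hrx ▸ hr), ?_⟩
    exact fun e he hex => hx (hex ▸ (harc e he).2)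
  · rw [coe_insert, Set.injOn_insert fun h => hroot _ h rfl]
    exact ⟨hB.injOn_snd, fun ⟨e, he, her⟩ => hroot e he her⟩
  · refine forall_mem_insert _ _ _ |>.2 ⟨.refl, fun v hv => ?_⟩
    exact .head (mem_insert_self _ _) (reflTransGen_mono_of_subset hsub (hreach v hv))

theorem rotate (hB : IsArborOn U B rt) {u z : V} (hu : u ∈ U) (hz : (rt, z) ∈ B)
    (hzu : Relation.ReflTransGen (fun p q => (p, q) ∈ B) z u) :
    IsArborOn U (insert (u, rt) (B.erase (rt, z))) z := by
  have ⟨hr, harc, hroot, _, hreach⟩ := hB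
  have hzr : z ≠ rt := hroot _ hz
  have hsub : B.erase (rt, z) ⊆ insert (u, rt) (B.erase (rt, z)) := subset_insert _ _
  have hur : (u, rt) ∉ (B.erase (rt, z) : Set (V × V)) := fun h => hroot _ (mem_of_mem_erase h) rfl
  have hzrt : Relation.ReflTransGen (fun p q => (p, q) ∈ insert (u, rt) (B.erase (rt, z))) z rt := by
    have hnot : ¬Relation.ReflTransGen (fun p q => (p, q) ∈ B) z rt := fun h =>
      hzr (eq_of_reflTransGen_of_forall_snd_eq (fun e he her => absurd her (hroot e he)) h)
    exact (reflTransGen_mono_of_subset hsub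
      (reflTransGen_erase_of_not_reflTransGen hnot hzu)).tail (mem_insert_self _ _)
  refine of_injOn_snd (harc _ hz).2 ?_ ?_ ?_ ?_
  · exact forall_mem_insert _ _ _ |>.2 ⟨⟨hu, hr⟩, fun e he => harc e (mem_of_mem_erase he)⟩
  · refine forall_mem_insert _ _ _ |>.2 ⟨hzr.symm, fun e he hez => ?_⟩
    exact ne_of_mem_erase he (hB.injOn_snd (mem_of_mem_erase he) hz hez)
  · rw [coe_insert, Set.injOn_insert hur]
    exact ⟨hB.injOn_snd.mono (coe_subset.2 (erase_subset _ _)),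
      fun ⟨e, he, her⟩ => hroot e (mem_of_mem_erase he) her⟩
  · refine fun v hv => reflTransGen_of_forall_notMem_snd_eq (fun e he heB => ?_) (hreach v hv) hzrt
    have : e = (rt, z) := by_contra fun hne => heB (mem_insert_of_mem (mem_erase.2 ⟨hne, he⟩))
    rw [this]

end IsArborOn

theorem IsSpanningArbor.exists_fst_mem_snd_notMem [Fintype V] [DecidableEq V]
    {A : Finset (V × V)} {s v : V} {U : Finset V} (hA : IsSpanningArbor A s) (hs : s ∈ U)
    (hv : v ∉ U) : ∃ e ∈ A, e.1 ∈ U ∧ e.2 ∉ U :=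
  exists_fst_mem_snd_notMem_of_reflTransGen (hA.2.2.2.2 v (mem_univ v)) hs hv

def IsRainbowColoring {k : ℕ} (A : Fin k → Finset (V × V)) (B : Finset (V × V))
    (c : V × V → Fin k) : Prop :=
  Set.InjOn c ↑B ∧ ∀ e ∈ B, e ∈ A (c e)

theorem IsRainbowColoring.mono {k : ℕ} {A : Fin k → Finset (V × V)} {B B' : Finset (V × V)}
    {c : V × V → Fin k} (hc : IsRainbowColoring A B c) (h : B' ⊆ B) :
    IsRainbowColoring A B' c :=
  ⟨hc.1.mono (coe_subset.2 h), fun e he => hc.2 e (h he)⟩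

theorem IsRainbowColoring.insert [DecidableEq V] {k : ℕ} {A : Fin k → Finset (V × V)}
    {B : Finset (V × V)} {c : V × V → Fin k} (hc : IsRainbowColoring A B c) {e : V × V}
    {i : Fin k} (he : e ∉ B) (hei : e ∈ A i) (hi : i ∉ B.image c) :
    IsRainbowColoring A (insert e B) (Function.update c e i) := by
  have hupd : Set.EqOn c (Function.update c e i) B := fun f hf =>
    (Function.update_of_ne (ne_of_mem_of_not_mem hf he) i c).symm
  refine ⟨?_, ?_⟩
  · rw [coe_insert, Set.injOn_insert he, Function.update_self, ← hupd.image_eq, ← coe_image]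
    exact ⟨hc.1.congr hupd, hi⟩
  · rw [forall_mem_insert, Function.update_self]
    exact ⟨hei, fun f hf => hupd hf ▸ hc.2 f hf⟩

theorem exists_rainbow_arbor_insert_of_root_mem [Fintype V] [DecidableEq V] {k : ℕ}
    {A : Fin k → Finset (V × V)} {U : Finset V} {B : Finset (V × V)} {rt s v : V}
    {c : V × V → Fin k} {i : Fin k} (hB : IsArborOn U B rt) (hc : IsRainbowColoring A B c)
    (hi : i ∉ B.image c) (hAi : IsSpanningArbor (A i) s) (hs : s ∈ U) (hv : v ∉ U) :
    ∃ b ∉ U, ∃ B' rt', IsArborOn (insert b U) B' rt' ∧ IsRainbowOf A B' := by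
  obtain ⟨⟨a, b⟩, hab, ha, hb⟩ := hAi.exists_fst_mem_snd_notMem hs hv
  exact ⟨b, hb, _, rt, hB.insert_arc ha hb, _, hc.insert (fun h => hb (hB.2.1 _ h).2) hab hi⟩

theorem exists_rainbow_arbor_freeing_used_color [DecidableEq V] {k : ℕ}
    {A : Fin k → Finset (V × V)} {U : Finset V} {B : Finset (V × V)} {rt u : V}
    {c : V × V → Fin k} {i : Fin k} (hB : IsArborOn U B rt) (hc : IsRainbowColoring A B c)
    (hi : i ∉ B.image c) (hu : (u, rt) ∈ A i) (huU : u ∈ U) (hur : u ≠ rt) :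
    ∃ j ∈ B.image c, ∃ B' z c', IsArborOn U B' z ∧ IsRainbowColoring A B' c' ∧
      j ∉ B'.image c' := by
  obtain hur' | ⟨z, hz, hzu⟩ := (hB.2.2.2.2 u huU).cases_head
  · exact absurd hur'.symm hur
  have hurB : (u, rt) ∉ B.erase (rt, z) := fun h => hB.2.2.1 _ (mem_of_mem_erase h) rfl
  have hc' := (hc.mono (erase_subset _ _)).insert hurB hu
    fun h => hi (image_subset_image (erase_subset _ _) h)
  refine ⟨c (rt, z), mem_image_of_mem c hz, _, z, _, hB.rotate huU hz hzu, hc', ?_⟩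
  rw [image_insert, mem_insert, not_or, Function.update_self]
  refine ⟨fun h => hi (h ▸ mem_image_of_mem c hz), fun hmem => ?_⟩
  obtain ⟨f, hf, hfc⟩ := mem_image.1 hmem
  rw [Function.update_of_ne (ne_of_mem_of_not_mem hf hurB)] at hfc
  exact ne_of_mem_erase hf (hc.1 (mem_of_mem_erase hf) hz hfc)

theorem injOn_setOf_apply_notMem {ι α : Type*} [Fintype ι] [DecidableEq α] {f : ι → α}
    {U : Finset α} (h : ∀ v, 2 ≤ (univ.filter (fun i => f i = v)).card → v ∈ U) :
    Set.InjOn f {i | f i ∉ U} := by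
  intro i hi j _ hij
  by_contra hne
  exact hi (h _ (one_lt_card.2 ⟨i, by simp, j, by simp [hij], hne⟩))

theorem apply_mem_of_card_compl_le {ι α : Type*} [Fintype ι] [Fintype α] [DecidableEq ι]
    [DecidableEq α] {f : ι → α} {S : Finset ι} {U : Finset α}
    (hinj : Set.InjOn f {i | f i ∉ U}) (hout : ∀ i ∉ S, f i ∉ U)
    (hcard : (univ \ U).card ≤ (univ \ S).card) {j : ι} (hj : j ∈ S) : f j ∈ U := by
  by_contra hjU
  have hout' : ∀ i ∈ insert j (univ \ S), f i ∉ U := by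
    simpa [hjU] using fun i hi => hout i hi
  have hle : (insert j (univ \ S)).card ≤ (univ \ U).card :=
    card_le_card_of_injOn f (fun i hi => by simpa using hout' i hi)
      (hinj.mono fun i hi => hout' i hi)
  rw [card_insert_of_notMem (by simp [hj])] at hle
  omega

theorem exists_rainbow_arbor_insert [Fintype V] [DecidableEq V]
    {A : Fin (Fintype.card V - 1) → Finset (V × V)} {r : Fin (Fintype.card V - 1) → V}
    (hA : ∀ i, IsSpanningArbor (A i) (r i)) {U : Finset V} {B : Finset (V × V)} {rt : V}
    {c : V × V → Fin (Fintype.card V - 1)} (hB : IsArborOn U B rt)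
    (hc : IsRainbowColoring A B c)
    (hmulti : ∀ v : V, 2 ≤ (univ.filter (fun i => r i = v)).card → v ∈ U) {v : V}
    (hv : v ∉ U) :
    ∃ b ∉ U, ∃ B' rt', IsArborOn (insert b U) B' rt' ∧ IsRainbowOf A B' := by
  have hcard : (univ \ U).card = (univ \ B.image c).card := by
    rw [card_univ_sdiff, card_univ_sdiff, card_image_of_injOn hc.1, Fintype.card_fin]
    have := hB.card_add_one
    have := card_le_univ U
    omega
  obtain ⟨i, hi⟩ : ∃ i, i ∉ B.image c := by
    obtain ⟨i, hi⟩ := card_pos.1 (hcard ▸ card_pos.2 ⟨v, by simpa using hv⟩)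
    exact ⟨i, (mem_sdiff.1 hi).2⟩
  by_cases hroot : ∃ j ∉ B.image c, r j ∈ U
  · obtain ⟨j, hj, hrj⟩ := hroot
    exact exists_rainbow_arbor_insert_of_root_mem hB hc hj (hA j) hrj hv
  push Not at hroot
  obtain ⟨⟨u, w⟩, hu, hw⟩ := exists_snd_eq_of_reflTransGen ((hA i).2.2.2.2 rt (mem_univ rt))
    fun h => hroot i hi (h ▸ hB.1)
  obtain rfl : w = rt := hw
  by_cases huU : u ∈ U
  · obtain ⟨j, hj, B', z, c', hB', hc', hj'⟩ :=
      exists_rainbow_arbor_freeing_used_color hB hc hi hu huU ((hA i).fst_ne_snd hu)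
    have hrj : r j ∈ U :=
      apply_mem_of_card_compl_le (injOn_setOf_apply_notMem hmulti) hroot hcard.le hj
    exact exists_rainbow_arbor_insert_of_root_mem hB' hc' hj' (hA j) hrj hv
  · exact ⟨u, huU, _, u, hB.insert_root huU, _, hc.insert (fun h => hB.2.2.1 _ h rfl) hu hi⟩

theorem stmt4_general [Fintype V] [DecidableEq V]
    (A : Fin (Fintype.card V - 1) → Finset (V × V)) (r : Fin (Fintype.card V - 1) → V)
    (hA : ∀ i, IsSpanningArbor (A i) (r i))
    (Vt : Finset V) (Bt : Finset (V × V)) (rt : V)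
    (hBt : IsArborOn Vt Bt rt) (hrb : IsRainbowOf A Bt)
    (hmulti : ∀ v : V, 2 ≤ (Finset.univ.filter (fun i => r i = v)).card → v ∈ Vt) :
    ∃ (B : Finset (V × V)) (r' : V), IsSpanningArbor B r' ∧ IsRainbowOf A B := by
  revert Bt rt hmulti
  refine strongDownwardInductionOn Vt (fun U ih _ B rt hB hrb hmulti => ?_) (card_le_univ Vt)
  obtain ⟨c, hc⟩ := hrb
  by_cases hU : U = univ
  · subst hU
    exact ⟨B, rt, hB, c, hc⟩
  obtain ⟨v, hv⟩ := not_forall.1 (mt eq_univ_of_forall hU)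
  obtain ⟨b, hb, B', rt', hB', hrb'⟩ := exists_rainbow_arbor_insert hA hB hc hmulti hv
  exact ih (card_le_univ _) (ssubset_insert hb) B' rt' hB' hrb'
    fun w hw => mem_insert_of_mem (hmulti w hw)

theorem stmt4 [Fintype V] [DecidableEq V] (hn : 2 ≤ Fintype.card V)
    (A : Fin (Fintype.card V - 1) → Finset (V × V)) (r : Fin (Fintype.card V - 1) → V)
    (hA : ∀ i, IsSpanningArbor (A i) (r i))
    (Vt : Finset V) (Bt : Finset (V × V)) (rt : V)
    (hBt : IsArborOn Vt Bt rt) (hrb : IsRainbowOf A Bt)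
    (hmulti : ∀ v : V, 2 ≤ (Finset.univ.filter (fun i => r i = v)).card → v ∈ Vt) :
    ∃ (B : Finset (V × V)) (r' : V), IsSpanningArbor B r' ∧ IsRainbowOf A B :=
  stmt4_general A r hA Vt Bt rt hBt hrb hmulti
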